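/- Let p = (p_i)_{i≥0} be a probability distribution on ℕ₀ with mean Σ_i i·p_i ≤ 1, and let T be a rooted plane tree with |T| > 1 such that π_p(T) := ∏_{i≥0} p_i^{n_T(i)} > 0. Then γ_p(T,T) := π_p(T) + η_p(T,T)·π_p(T)² > 0, where η_p(T,T) := (|T|−1)² − Σ_{i≥0} n_T(i)²/p_i (with 0/0 := 0). -/

import Mathlib

inductive PTree : Type where
  | node : List PTree → PTree

namespace PTree

/-- The number of vertices of a rooted plane tree. -/
def size : PTree → ℕ
  | node ts => 1 + (ts.attach.map (fun x => size x.1)).sum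
decreasing_by
  simp only [PTree.node.sizeOf_spec]
  have := List.sizeOf_lt_of_mem x.2
  omega

/-- `degCount i T` is the number of vertices of `T` with exactly `i` children. -/
def degCount (i : ℕ) : PTree → ℕ
  | node ts => (if ts.length = i then 1 else 0) + (ts.attach.map (fun x => degCount i x.1)).sum
decreasing_by
  simp only [PTree.node.sizeOf_spec]
  have := List.sizeOf_lt_of_mem x.2
  omega

end PTree
/-- `piP p T = ∏_i p_i ^ n_T(i)`, the Galton--Watson probability of the plane tree `T`
under offspring distribution `p`.  (All out-degrees of `T` are `< T.size`.) -/
noncomputable def piP (p : ℕ → ℝ) (T : PTree) : ℝ :=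
  ∏ i ∈ Finset.range T.size, p i ^ T.degCount i
/-- `etaP p T = (|T|-1)^2 - ∑_i n_T(i)^2 / p_i` (with `x/0 = 0` as in Lean). -/
noncomputable def etaP (p : ℕ → ℝ) (T : PTree) : ℝ :=
  ((T.size : ℝ) - 1) ^ 2 - ∑ i ∈ Finset.range T.size, (T.degCount i : ℝ) ^ 2 / p i

/-- `gammaP p T = π_p(T) + η_p(T,T) π_p(T)^2`. -/
noncomputable def gammaP (p : ℕ → ℝ) (T : PTree) : ℝ :=
  piP p T + etaP p T * (piP p T) ^ 2

/-!
On the degree set `D` of `T`, with multiplicities `m_i = n_T(i)` summing to `N = |T|`, the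
probability is `π = ∏_{i ∈ D} p_i ^ m_i` and `γ = π (1 + η π)`; so it suffices to show
`π ≤ 1 + η π` whenever `∑_{i ∈ D} p_i ≤ 1` and `|D| ≥ 2` (a tree with an edge has a leaf and a
root of positive degree). This is an induction on `N`. When every `m_i = 1` it reduces to
`∑_i ∏_{j ≠ i} p_j ≤ 1`. Raising one multiplicity `m_j` by one multiplies `π` by `p_j`, and the
inequality survives because `(2 m_j + 1) p_j ^ m_j (1 - p_j) ≤ 1`, while the other factors of `π`
are bounded by `1 - p_j`.
-/

open Finset Function

theorem add_pow_mul_sub_le {a b : ℝ} (ha : 0 ≤ a) (hab : 0 ≤ a + b) (r : ℕ) :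
    (a + b) ^ r * (a - r * b) ≤ a ^ (r + 1) := by
  induction r with
  | zero => simp
  | succ r ih =>
    have hstep : (a + b) * (a - (r + 1) * b) ≤ a * (a - r * b) := by nlinarith [sq_nonneg b]
    calc (a + b) ^ (r + 1) * (a - ↑(r + 1) * b)
        = (a + b) ^ r * ((a + b) * (a - (r + 1) * b)) := by push_cast; ring
      _ ≤ (a + b) ^ r * (a * (a - r * b)) := by gcongr
      _ = a * ((a + b) ^ r * (a - r * b)) := by ring
      _ ≤ a * a ^ (r + 1) := by gcongr
      _ = a ^ (r + 1 + 1) := by ring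

theorem two_mul_add_one_mul_pow_mul_one_sub_le_one (r : ℕ) {x : ℝ} (hx : 0 ≤ x) :
    (2 * r + 1) * (x ^ r * (1 - x)) ≤ 1 := by
  rcases Nat.eq_zero_or_pos r with rfl | hr
  · simpa using hx
  have hr' : (0 : ℝ) < r := by exact_mod_cast hr
  -- `x ^ r * (1 - x)` is maximal at `x = r / (r + 1)`
  have hmax : (r * (r + 1) ^ (r + 1)) * (x ^ r * (1 - x)) ≤ r ^ (r + 1) := by
    have := add_pow_mul_sub_le hr'.le (b := (r + 1) * x - r) (by nlinarith) r
    convert this using 1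
    rw [add_sub_cancel, mul_pow]
    ring
  have hcoef : (2 * r + 1) * (r : ℝ) ^ r ≤ (r + 1) ^ (r + 1) := by
    have := add_pow_mul_sub_le (a := r + 1) (b := -1) (by positivity) (by simp) r
    convert this using 1
    ring
  have key : (r * (r + 1) ^ (r + 1)) * ((2 * r + 1) * (x ^ r * (1 - x)))
      ≤ r * (r + 1) ^ (r + 1) :=
    calc (r * (r + 1) ^ (r + 1)) * ((2 * r + 1) * (x ^ r * (1 - x)))
        = (2 * r + 1) * ((r * (r + 1) ^ (r + 1)) * (x ^ r * (1 - x))) := by ring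
      _ ≤ (2 * r + 1) * r ^ (r + 1) := by gcongr
      _ = r * ((2 * r + 1) * r ^ r) := by ring
      _ ≤ r * (r + 1) ^ (r + 1) := by gcongr
  exact le_of_mul_le_mul_left (by simpa using key) (by positivity)

namespace Finset

theorem sum_list_map_comm {α β M : Type*} [AddCommMonoid M] (s : Finset α) (l : List β)
    (f : α → β → M) : ∑ i ∈ s, (l.map (f i)).sum = (l.map fun b ↦ ∑ i ∈ s, f i b).sum := by
  induction l <;> simp [sum_add_distrib, *]

variable {ι : Type*} {s : Finset ι} {p : ι → ℝ}

theorem le_one_of_mem_of_sum_le_one (hp : ∀ i ∈ s, 0 ≤ p i) (hs : ∑ i ∈ s, p i ≤ 1) {i : ι}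
    (hi : i ∈ s) : p i ≤ 1 :=
  (single_le_sum hp hi).trans hs

variable [DecidableEq ι]

theorem prod_le_of_mem_of_le_one (h0 : ∀ i ∈ s, 0 ≤ p i) (h1 : ∀ i ∈ s, p i ≤ 1) {l : ι}
    (hl : l ∈ s) : ∏ i ∈ s, p i ≤ p l := by
  rw [← mul_prod_erase s p hl]
  exact mul_le_of_le_one_right (h0 l hl)
    (prod_le_one (fun i hi ↦ h0 i (mem_of_mem_erase hi)) fun i hi ↦ h1 i (mem_of_mem_erase hi))

theorem sum_prod_erase_le_one (hs : s.Nonempty) (h0 : ∀ i ∈ s, 0 ≤ p i)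
    (h1 : ∑ i ∈ s, p i ≤ 1) : ∑ i ∈ s, ∏ j ∈ s.erase i, p j ≤ 1 := by
  induction hs using Nonempty.cons_induction with
  | singleton a => simp
  | cons a t hat ht ih =>
    simp only [sum_cons, mem_cons, forall_eq_or_imp] at h0 h1 ⊢
    have hprod : ∏ j ∈ t, p j ≤ 1 - p a := by
      obtain ⟨l, hl⟩ := ht
      have hle1 : ∀ i ∈ t, p i ≤ 1 := fun i ↦ le_one_of_mem_of_sum_le_one h0.2 (by linarith [h0.1])
      linarith [prod_le_of_mem_of_le_one h0.2 hle1 hl, single_le_sum h0.2 hl]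
    have hterm : ∀ i ∈ t, ∏ j ∈ (insert a t).erase i, p j = p a * ∏ j ∈ t.erase i, p j := by
      intro i hi
      rw [erase_insert_of_ne (by rintro rfl; exact hat hi),
        prod_insert fun h ↦ hat (mem_of_mem_erase h)]
    rw [cons_eq_insert, erase_insert_eq_erase, erase_eq_of_notMem hat, sum_congr rfl hterm,
      ← mul_sum]
    nlinarith [ih h0.2 (by linarith [h0.1])]

@[to_additive]
theorem prod_apply_update_of_mem {M : Type*} [CommMonoid M] {α : Type*} (f : ι → α → M)
    (m : ι → α) {j : ι} (hj : j ∈ s) (v : α) :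
    ∏ i ∈ s, f i (update m j v i) = f j v * ∏ i ∈ s.erase j, f i (m i) := by
  rw [← mul_prod_erase s _ hj, update_self]
  congr 1
  exact prod_congr rfl fun i hi ↦ by rw [update_of_ne (ne_of_mem_erase hi)]

end Finset

section Multiplicities

variable {ι : Type*} [DecidableEq ι] {s : Finset ι} {p : ι → ℝ}

noncomputable def etaMult (s : Finset ι) (p : ι → ℝ) (m : ι → ℕ) : ℝ :=
  (((∑ i ∈ s, m i : ℕ) : ℝ) - 1) ^ 2 - ∑ i ∈ s, (m i : ℝ) ^ 2 / p i

theorem prod_mul_one_add_sum_inv_le (hp : ∀ i ∈ s, 0 < p i) (hs : ∑ i ∈ s, p i ≤ 1)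
    (hne : s.Nonempty) : (∏ i ∈ s, p i) * (1 + ∑ i ∈ s, (p i)⁻¹) ≤ 1 + ∏ i ∈ s, p i := by
  have hterm : ∀ i ∈ s, (∏ j ∈ s, p j) * (p i)⁻¹ = ∏ j ∈ s.erase i, p j := fun i hi ↦ by
    rw [← mul_prod_erase s p hi, mul_comm (p i), mul_assoc, mul_inv_cancel₀ (hp i hi).ne', mul_one]
  rw [mul_one_add, mul_sum, sum_congr rfl hterm, add_comm]
  gcongr
  exact sum_prod_erase_le_one hne (fun i hi ↦ (hp i hi).le) hs

theorem two_mul_add_one_mul_prod_pow_le_one (hp : ∀ i ∈ s, 0 < p i) (hs : ∑ i ∈ s, p i ≤ 1)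
    (m : ι → ℕ) {j l : ι} (hj : j ∈ s) (hl : l ∈ s) (hlj : l ≠ j) (hml : m l ≠ 0) :
    (2 * m j + 1) * ∏ i ∈ s, p i ^ m i ≤ 1 := by
  have hp1 : ∀ i ∈ s, p i ≤ 1 := fun i ↦ le_one_of_mem_of_sum_le_one (fun i hi ↦ (hp i hi).le) hs
  have hrest : ∏ i ∈ s.erase j, p i ^ m i ≤ 1 - p j :=
    calc ∏ i ∈ s.erase j, p i ^ m i
        ≤ p l ^ m l := prod_le_of_mem_of_le_one
          (fun i hi ↦ pow_nonneg (hp i (mem_of_mem_erase hi)).le _)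
          (fun i hi ↦ pow_le_one₀ (hp i (mem_of_mem_erase hi)).le (hp1 i (mem_of_mem_erase hi)))
          (mem_erase.2 ⟨hlj, hl⟩)
      _ ≤ p l := pow_le_of_le_one (hp l hl).le (hp1 l hl) hml
      _ ≤ 1 - p j := by linarith [add_le_sum (fun i hi ↦ (hp i hi).le) hj hl hlj.symm]
  rw [← mul_prod_erase s _ hj]
  calc (2 * (m j : ℝ) + 1) * (p j ^ m j * ∏ i ∈ s.erase j, p i ^ m i)
      ≤ (2 * m j + 1) * (p j ^ m j * (1 - p j)) := by
        gcongr
        exact pow_nonneg (hp j hj).le _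
    _ ≤ 1 := two_mul_add_one_mul_pow_mul_one_sub_le_one _ (hp j hj).le

theorem prod_pow_update_succ (m : ι → ℕ) {j : ι} (hj : j ∈ s) :
    ∏ i ∈ s, p i ^ update m j (m j + 1) i = p j * ∏ i ∈ s, p i ^ m i := by
  rw [prod_apply_update_of_mem (fun i k ↦ p i ^ k) m hj, ← mul_prod_erase s _ hj, pow_succ]
  ring

theorem etaMult_update_succ (m : ι → ℕ) {j : ι} (hj : j ∈ s) (hpj : p j ≠ 0) :
    etaMult s p (update m j (m j + 1))
      = etaMult s p m + (2 * (∑ i ∈ s, m i : ℕ) - 1) - (2 * m j + 1) / p j := by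
  rw [etaMult, etaMult, sum_apply_update_of_mem (fun _ k ↦ k) m hj,
    sum_apply_update_of_mem (fun i (k : ℕ) ↦ (k : ℝ) ^ 2 / p i) m hj, ← add_sum_erase s m hj,
    ← add_sum_erase s (fun i ↦ (m i : ℝ) ^ 2 / p i) hj]
  push_cast
  field_simp
  ring

theorem prod_pow_le_one_add_etaMult_mul_update_succ (hp : ∀ i ∈ s, 0 < p i)
    (hs : ∑ i ∈ s, p i ≤ 1) (m : ι → ℕ) {j l : ι} (hj : j ∈ s) (hl : l ∈ s) (hlj : l ≠ j)
    (hml : m l ≠ 0) (h : ∏ i ∈ s, p i ^ m i ≤ 1 + etaMult s p m * ∏ i ∈ s, p i ^ m i) :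
    ∏ i ∈ s, p i ^ update m j (m j + 1) i
      ≤ 1 + etaMult s p (update m j (m j + 1)) * ∏ i ∈ s, p i ^ update m j (m j + 1) i := by
  have hpj := hp j hj
  have hpj1 := le_one_of_mem_of_sum_le_one (fun i hi ↦ (hp i hi).le) hs hj
  have hmj : (m j : ℝ) + 1 ≤ (∑ i ∈ s, m i : ℕ) := by
    exact_mod_cast (add_le_sum (fun i _ ↦ Nat.zero_le (m i)) hj hl hlj.symm).trans' (by omega)
  have hbound := two_mul_add_one_mul_prod_pow_le_one hp hs m hj hl hlj hml
  rw [prod_pow_update_succ m hj, etaMult_update_succ m hj hpj.ne']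
  set π := ∏ i ∈ s, p i ^ m i
  set N : ℝ := ((∑ i ∈ s, m i : ℕ) : ℝ)
  have hπ : 0 ≤ π := prod_nonneg fun i hi ↦ pow_nonneg (hp i hi).le _
  -- `(2 m_j + 1) π ≤ 1` is spent on the share `1 - p_j`, and `m_j < N` on the share `p_j`
  have hgap : (2 * m j + 1) * π ≤ (1 - p j) + p j * ((2 * N - 1) * π) := by
    have hcoef : 2 * (m j : ℝ) + 1 ≤ 2 * N - 1 := by linarith
    nlinarith [mul_le_mul_of_nonneg_left hbound (sub_nonneg.2 hpj1),
      mul_le_mul_of_nonneg_left hcoef (mul_nonneg hpj.le hπ)]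
  have hcancel : (2 * m j + 1) / p j * (p j * π) = (2 * m j + 1) * π := by field_simp
  nlinarith [mul_le_mul_of_nonneg_left h hpj.le]

theorem prod_pow_le_one_add_etaMult_mul_of_forall_eq_one (hp : ∀ i ∈ s, 0 < p i)
    (hs : ∑ i ∈ s, p i ≤ 1) (hcard : 1 < #s) (m : ι → ℕ) (hone : ∀ i ∈ s, m i = 1) :
    ∏ i ∈ s, p i ^ m i ≤ 1 + etaMult s p m * ∏ i ∈ s, p i ^ m i := by
  have hprod : ∏ i ∈ s, p i ^ m i = ∏ i ∈ s, p i :=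
    prod_congr rfl fun i hi ↦ by rw [hone i hi, pow_one]
  have hsq : ∑ i ∈ s, (m i : ℝ) ^ 2 / p i = ∑ i ∈ s, (p i)⁻¹ :=
    sum_congr rfl fun i hi ↦ by rw [hone i hi]; simp
  have hcount : ∑ i ∈ s, m i = #s := by rw [sum_congr rfl hone, card_eq_sum_ones]
  have hN1 : (1 : ℝ) ≤ ((#s : ℝ) - 1) ^ 2 := by
    have : (2 : ℝ) ≤ #s := by exact_mod_cast hcard
    nlinarith
  have hbase := prod_mul_one_add_sum_inv_le hp hs (card_pos.1 (by omega))
  have hπ : 0 ≤ ∏ i ∈ s, p i := prod_nonneg fun i hi ↦ (hp i hi).le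
  rw [etaMult, hcount, hprod, hsq]
  nlinarith [mul_le_mul_of_nonneg_right hN1 hπ]

theorem prod_pow_le_one_add_etaMult_mul (hp : ∀ i ∈ s, 0 < p i) (hs : ∑ i ∈ s, p i ≤ 1)
    (hcard : 1 < #s) (m : ι → ℕ) (hm : ∀ i ∈ s, m i ≠ 0) :
    ∏ i ∈ s, p i ^ m i ≤ 1 + etaMult s p m * ∏ i ∈ s, p i ^ m i := by
  induction hN : ∑ i ∈ s, m i using Nat.strong_induction_on generalizing m with
  | _ N ih =>
  by_cases hone : ∀ i ∈ s, m i = 1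
  · exact prod_pow_le_one_add_etaMult_mul_of_forall_eq_one hp hs hcard m hone
  push Not at hone
  obtain ⟨j, hj, hmj⟩ := hone
  obtain ⟨l, hl, hlj⟩ := exists_mem_ne hcard j
  set m' := update m j (m j - 1)
  have hm_eq : m = update m' j (m' j + 1) := by
    simp only [m', update_self, update_idem]
    rw [Nat.sub_add_cancel (by have := hm j hj; omega), update_eq_self]
  have hm' : ∀ i ∈ s, m' i ≠ 0 := fun i hi ↦ by
    rcases eq_or_ne i j with rfl | hij
    · simp only [m', update_self]
      have := hm i hi
      omega
    · simpa [m', update_of_ne hij] using hm i hi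
  have hN' : ∑ i ∈ s, m' i < N := by
    rw [← hN, hm_eq, sum_apply_update_of_mem (fun _ k ↦ k) m' hj, ← add_sum_erase s m' hj]
    omega
  rw [hm_eq]
  exact prod_pow_le_one_add_etaMult_mul_update_succ hp hs m' hj hl hlj (hm' l hl)
    (ih _ hN' m' hm' rfl)

end Multiplicities

namespace PTree

theorem ind {motive : PTree → Prop}
    (node : ∀ ts : List PTree, (∀ t ∈ ts, motive t) → motive (PTree.node ts)) : ∀ t, motive t
  | .node ts => node ts fun t _ ↦ ind node t
decreasing_by
  simp only [PTree.node.sizeOf_spec]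
  have := List.sizeOf_lt_of_mem ‹t ∈ ts›
  omega

@[simp]
theorem size_node (ts : List PTree) : (node ts).size = 1 + (ts.map size).sum := by
  rw [size, List.attach_map_val]

@[simp]
theorem degCount_node (i : ℕ) (ts : List PTree) :
    (node ts).degCount i = (if ts.length = i then 1 else 0) + (ts.map (degCount i)).sum := by
  rw [degCount, List.attach_map_val]

theorem size_pos (t : PTree) : 0 < t.size := by
  cases t
  simp

theorem length_lt_size (ts : List PTree) : ts.length < (node ts).size := by
  have := List.length_le_sum_of_one_le (ts.map size) (by
    simp only [List.mem_map]
    rintro _ ⟨t, -, rfl⟩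
    exact size_pos t)
  simp only [List.length_map] at this
  simp only [size_node]
  omega

theorem size_lt_size_of_mem {t : PTree} {ts : List PTree} (ht : t ∈ ts) :
    t.size < (node ts).size := by
  have := List.le_sum_of_mem (List.mem_map_of_mem (f := size) ht)
  simp only [size_node]
  omega

theorem sum_range_degCount (t : PTree) {N : ℕ} (hN : t.size ≤ N) :
    ∑ i ∈ range N, t.degCount i = t.size := by
  induction t using ind generalizing N with
  | node ts ih =>
    have hchildren : (ts.map fun t ↦ ∑ i ∈ range N, t.degCount i).sum = (ts.map size).sum :=
      congrArg List.sum <| List.map_congr_left fun t ht ↦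
        ih t ht ((size_lt_size_of_mem ht).le.trans hN)
    simp only [degCount_node, sum_add_distrib, sum_list_map_comm, hchildren, sum_ite_eq,
      mem_range, (length_lt_size ts).trans_le hN, if_true, size_node]

theorem degCount_zero_pos (t : PTree) : 0 < t.degCount 0 := by
  induction t using ind with
  | node ts ih =>
    rcases ts with _ | ⟨t, ts⟩
    · simp
    · have := ih t List.mem_cons_self
      simp only [degCount_node, List.map_cons, List.sum_cons]
      omega

def degreeSet (T : PTree) : Finset ℕ := {i ∈ range T.size | T.degCount i ≠ 0}

theorem mem_degreeSet {T : PTree} {i : ℕ} : i ∈ T.degreeSet ↔ i < T.size ∧ T.degCount i ≠ 0 := by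
  simp [degreeSet]

theorem one_lt_card_degreeSet {T : PTree} (hT : 1 < T.size) : 1 < #T.degreeSet := by
  obtain ⟨ts⟩ := T
  have hne : ts.length ≠ 0 := by
    rintro h
    simp [List.length_eq_zero_iff.1 h] at hT
  refine one_lt_card.2 ⟨0, ?_, ts.length, ?_, hne.symm⟩
  · exact mem_degreeSet.2 ⟨size_pos _, (degCount_zero_pos _).ne'⟩
  · exact mem_degreeSet.2 ⟨length_lt_size ts, by simp⟩

theorem sum_degCount_degreeSet (T : PTree) : ∑ i ∈ T.degreeSet, T.degCount i = T.size := by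
  rw [degreeSet, sum_filter_ne_zero, sum_range_degCount T le_rfl]

end PTree

theorem piP_eq_prod_degreeSet (p : ℕ → ℝ) (T : PTree) :
    piP p T = ∏ i ∈ T.degreeSet, p i ^ T.degCount i := by
  rw [piP, PTree.degreeSet, prod_filter_of_ne]
  intro i _ h hzero
  exact h (by rw [hzero, pow_zero])

theorem etaP_eq_etaMult (p : ℕ → ℝ) (T : PTree) :
    etaP p T = etaMult T.degreeSet p (PTree.degCount · T) := by
  rw [etaP, etaMult, T.sum_degCount_degreeSet, PTree.degreeSet, sum_filter_of_ne]
  intro i _ h hzero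
  exact h (by simp [hzero])

theorem pos_of_mem_degreeSet {p : ℕ → ℝ} (hp0 : ∀ i, 0 ≤ p i) {T : PTree} (hpi : 0 < piP p T)
    {i : ℕ} (hi : i ∈ T.degreeSet) : 0 < p i := by
  rw [piP_eq_prod_degreeSet] at hpi
  refine (hp0 i).lt_of_ne' (ne_zero_pow (PTree.mem_degreeSet.1 hi).2 ?_)
  exact (prod_ne_zero_iff.1 hpi.ne') i hi

theorem stmt_11_general (p : ℕ → ℝ) (hp0 : ∀ i, 0 ≤ p i) (hp1 : HasSum p 1)
    (T : PTree) (hT : 1 < T.size) (hpi : 0 < piP p T) :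
    0 < gammaP p T := by
  have hkey := prod_pow_le_one_add_etaMult_mul (fun i hi ↦ pos_of_mem_degreeSet hp0 hpi hi)
    (sum_le_hasSum _ (fun i _ ↦ hp0 i) hp1) (PTree.one_lt_card_degreeSet hT)
    (PTree.degCount · T) (fun i hi ↦ (PTree.mem_degreeSet.1 hi).2)
  rw [← piP_eq_prod_degreeSet, ← etaP_eq_etaMult] at hkey
  rw [gammaP]
  nlinarith [mul_le_mul_of_nonneg_left hkey hpi.le, mul_pos hpi hpi]

/-- If `p` is a probability distribution on `ℕ` with mean `≤ 1` and `T` is a plane tree with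
`|T| > 1` and `π_p(T) > 0`, then `γ_p(T,T) = π_p(T) + η_p(T,T) π_p(T)² > 0`. -/
theorem stmt_11 (p : ℕ → ℝ) (hp0 : ∀ i, 0 ≤ p i) (hp1 : HasSum p 1)
    (hmean : ∑' i : ℕ, (i : ℝ) * p i ≤ 1)
    (T : PTree) (hT : 1 < T.size) (hpi : 0 < piP p T) :
    0 < gammaP p T :=
  stmt_11_general p hp0 hp1 T hT hpi
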